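/- The unique solution f : [0,T_c] → [0,∞) of the gap equation F(T, f(T)) = 0 (with f(0) = Δ² and f(T_c) = 0) is strictly decreasing on [0, T_c]: if 0 ≤ T₁ < T₂ ≤ T_c then f(T₁) > f(T₂). -/

import Mathlib

/-!
Write `s = √(ξ² + Y)`. The integrand `tanh (s / (2 k_B T)) / s` of the gap equation is strictly
decreasing in `T` (because `tanh` is strictly increasing) and nonincreasing in `Y` (because
`x ↦ tanh x / x` is nonincreasing on `(0, ∞)`), and at `T = 0` it is replaced by the strictly
larger `1 / s`. So if `T₁ < T₂` but `f T₁ ≤ f T₂`, the integral at `(T₂, f T₂)` would be strictly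
smaller than the one at `(T₁, f T₁)`, although both equal `1 / (U₀ N₀)`.
-/

open Real intervalIntegral Set

namespace Real

theorem hasDerivAt_tanh (x : ℝ) : HasDerivAt tanh (1 / cosh x ^ 2) x := by
  have h := (hasDerivAt_sinh x).div (hasDerivAt_cosh x) (cosh_pos x).ne'
  rwa [show sinh / cosh = tanh from funext fun y => (tanh_eq_sinh_div_cosh y).symm,
    show cosh x * cosh x - sinh x * sinh x = 1 by nlinarith [cosh_sq_sub_sinh_sq x]] at h

theorem continuous_tanh : Continuous tanh :=
  continuous_iff_continuousAt.2 fun x => (hasDerivAt_tanh x).continuousAt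

theorem strictMono_tanh : StrictMono tanh :=
  strictMono_of_deriv_pos fun x => by rw [(hasDerivAt_tanh x).deriv]; positivity

theorem antitoneOn_tanh_div_self : AntitoneOn (fun x => tanh x / x) (Ioi 0) := by
  have hderiv : ∀ x ∈ Ioi (0 : ℝ), HasDerivAt (fun x => tanh x / x)
      ((1 / cosh x ^ 2 * x - tanh x * 1) / x ^ 2) x :=
    fun x hx => (hasDerivAt_tanh x).div (hasDerivAt_id x) (ne_of_gt hx)
  refine antitoneOn_of_deriv_nonpos (convex_Ioi 0)
    (continuous_tanh.continuousOn.div continuousOn_id fun x hx => ne_of_gt hx) ?_ ?_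
  · rw [interior_Ioi]
    exact fun x hx => (hderiv x hx).differentiableAt.differentiableWithinAt
  · rw [interior_Ioi]
    intro x hx
    rw [(hderiv x hx).deriv]
    have hx : 0 < x := hx
    -- `x ≤ sinh x cosh x = sinh (2x) / 2` is the whole content of the sign condition
    have hsinh : 2 * x < sinh (2 * x) := self_lt_sinh_iff.2 (by positivity)
    rw [sinh_two_mul] at hsinh
    have hnum : 1 / cosh x ^ 2 * x ≤ tanh x := by
      rw [tanh_eq_sinh_div_cosh, div_mul_eq_mul_div, one_mul,
        div_le_div_iff₀ (by positivity) (cosh_pos x)]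
      nlinarith [cosh_pos x]
    exact div_nonpos_of_nonpos_of_nonneg (by linarith) (by positivity)

theorem tanh_div_le_tanh_div {d s₁ s₂ : ℝ} (hd : 0 < d) (hs₁ : 0 < s₁) (hs : s₁ ≤ s₂) :
    tanh (s₂ / d) / s₂ ≤ tanh (s₁ / d) / s₁ := by
  have hs₂ : 0 < s₂ := hs₁.trans_le hs
  have h := antitoneOn_tanh_div_self (mem_Ioi.2 (div_pos hs₁ hd)) (mem_Ioi.2 (div_pos hs₂ hd))
    (div_le_div_of_nonneg_right hs hd.le)
  simp only [div_div_eq_mul_div] at h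
  rwa [mul_div_right_comm, mul_div_right_comm _ d, mul_le_mul_iff_left₀ hd] at h

end Real

namespace Gap

/-- The integrand of the gap equation at `c = 2 k_B T` and `Y = Δ²`. -/
noncomputable def integrand (c Y ξ : ℝ) : ℝ := 1 / √(ξ ^ 2 + Y) * tanh (√(ξ ^ 2 + Y) / c)

theorem sqrt_sq_add_pos {ξ Y : ℝ} (hξ : 0 < ξ) (hY : 0 ≤ Y) : 0 < √(ξ ^ 2 + Y) :=
  sqrt_pos.2 (by positivity)

theorem continuousOn_one_div_sqrt_sq_add {Y : ℝ} (hY : 0 ≤ Y) :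
    ContinuousOn (fun ξ => 1 / √(ξ ^ 2 + Y)) (Ioi 0) :=
  continuousOn_const.div (by fun_prop) fun _ hξ => (sqrt_sq_add_pos hξ hY).ne'

theorem continuousOn_integrand (c : ℝ) {Y : ℝ} (hY : 0 ≤ Y) :
    ContinuousOn (integrand c Y) (Ioi 0) :=
  (continuousOn_one_div_sqrt_sq_add hY).mul
    (continuous_tanh.comp (by fun_prop : Continuous fun ξ : ℝ => √(ξ ^ 2 + Y) / c)).continuousOn

theorem integrand_lt_integrand {c₁ c₂ Y₁ Y₂ ξ : ℝ} (hξ : 0 < ξ) (hc₁ : 0 < c₁) (hc : c₁ < c₂)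
    (hY₁ : 0 ≤ Y₁) (hY : Y₁ ≤ Y₂) : integrand c₂ Y₂ ξ < integrand c₁ Y₁ ξ := by
  have hs₁ := sqrt_sq_add_pos hξ hY₁
  have hs₂ := sqrt_sq_add_pos hξ (hY₁.trans hY)
  have hs : √(ξ ^ 2 + Y₁) ≤ √(ξ ^ 2 + Y₂) := sqrt_le_sqrt (by linarith)
  unfold integrand
  calc 1 / √(ξ ^ 2 + Y₂) * tanh (√(ξ ^ 2 + Y₂) / c₂)
      < 1 / √(ξ ^ 2 + Y₂) * tanh (√(ξ ^ 2 + Y₂) / c₁) :=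
        mul_lt_mul_of_pos_left (strictMono_tanh (div_lt_div_of_pos_left hs₂ hc₁ hc))
          (by positivity)
    _ ≤ 1 / √(ξ ^ 2 + Y₁) * tanh (√(ξ ^ 2 + Y₁) / c₁) := by
        simpa only [one_div_mul_eq_div] using tanh_div_le_tanh_div hc₁ hs₁ hs

theorem integrand_lt_one_div_sqrt {c Y₁ Y₂ ξ : ℝ} (hξ : 0 < ξ) (hY₁ : 0 ≤ Y₁) (hY : Y₁ ≤ Y₂) :
    integrand c Y₂ ξ < 1 / √(ξ ^ 2 + Y₁) :=
  calc integrand c Y₂ ξ < 1 / √(ξ ^ 2 + Y₂) :=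
        mul_lt_of_lt_one_right (one_div_pos.2 (sqrt_sq_add_pos hξ (hY₁.trans hY))) (tanh_lt_one _)
    _ ≤ 1 / √(ξ ^ 2 + Y₁) :=
        one_div_le_one_div_of_le (sqrt_sq_add_pos hξ hY₁) (sqrt_le_sqrt (by linarith))

end Gap

theorem intervalIntegral.integral_lt_integral_of_continuousOn_of_lt {f g : ℝ → ℝ} {a b : ℝ}
    (hab : a < b) (hf : ContinuousOn f (Icc a b)) (hg : ContinuousOn g (Icc a b))
    (hfg : ∀ x ∈ Icc a b, f x < g x) : ∫ x in a..b, f x < ∫ x in a..b, g x :=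
  integral_lt_integral_of_continuousOn_of_le_of_exists_lt hab hf hg
    (fun x hx => (hfg x (Ioc_subset_Icc_self hx)).le)
    ⟨a, left_mem_Icc.2 hab.le, hfg a (left_mem_Icc.2 hab.le)⟩

theorem gap_function_strictAnti_general
    (kB hbar ωD U0 N0 ε Tc Δ : ℝ) (f : ℝ → ℝ)
    (hkB : 0 < kB) (hε : 0 < ε) (hTc : 0 < Tc)
    (hcut : 2*kB*Tc*ε < hbar*ωD)
    (hf_nonneg : ∀ T ∈ Set.Icc (0:ℝ) Tc, 0 ≤ f T)
    (hf0 : f 0 = Δ^2)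
    (hgap0 : (∫ ξ in (2*kB*Tc*ε)..(hbar*ωD), 1/Real.sqrt (ξ^2 + Δ^2)) = 1/(U0*N0))
    (hgap : ∀ T ∈ Set.Ioc (0:ℝ) Tc,
      (∫ ξ in (2*kB*Tc*ε)..(hbar*ωD),
        (1/Real.sqrt (ξ^2 + f T)) * Real.tanh (Real.sqrt (ξ^2 + f T)/(2*kB*T)))
        = 1/(U0*N0)) :
    StrictAntiOn f (Set.Icc 0 Tc) := by
  intro T₁ h₁ T₂ h₂ hT
  have hξ : Icc (2*kB*Tc*ε) (hbar*ωD) ⊆ Ioi 0 := fun ξ hξ =>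
    (by positivity : (0:ℝ) < 2*kB*Tc*ε).trans_le hξ.1
  have hT₂ : T₂ ∈ Ioc 0 Tc := ⟨h₁.1.trans_lt hT, h₂.2⟩
  have hY₂ := hf_nonneg T₂ h₂
  have hcont₂ := (Gap.continuousOn_integrand (2*kB*T₂) hY₂).mono hξ
  by_contra! hle
  rcases h₁.1.eq_or_lt with rfl | hT₁
  · rw [hf0] at hle
    have hlt := integral_lt_integral_of_continuousOn_of_lt hcut hcont₂
      ((Gap.continuousOn_one_div_sqrt_sq_add (sq_nonneg Δ)).mono hξ)
      fun ξ hξ' => Gap.integrand_lt_one_div_sqrt (hξ hξ') (sq_nonneg Δ) hle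
    exact hlt.ne ((hgap T₂ hT₂).trans hgap0.symm)
  · have hlt := integral_lt_integral_of_continuousOn_of_lt hcut hcont₂
      ((Gap.continuousOn_integrand (2*kB*T₁) (hf_nonneg T₁ h₁)).mono hξ)
      fun ξ hξ' => Gap.integrand_lt_integrand (hξ hξ') (by positivity) (by gcongr)
        (hf_nonneg T₁ h₁) hle
    exact hlt.ne ((hgap T₂ hT₂).trans (hgap T₁ ⟨hT₁, h₁.2⟩).symm)

/-- The solution `f` of the gap equation (with `f(0) = Δ²` and `f(T_c) = 0`)
is strictly decreasing on `[0,T_c]`. -/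
theorem gap_function_strictAnti
    (kB hbar ωD U0 N0 ε Tc Δ : ℝ) (f : ℝ → ℝ)
    (hkB : 0 < kB) (hhbar : 0 < hbar) (hωD : 0 < ωD)
    (hU0 : 0 < U0) (hN0 : 0 < N0) (hε : 0 < ε) (hTc : 0 < Tc)
    (hcut : 2*kB*Tc*ε < hbar*ωD) (hΔ : 0 < Δ)
    (hf_cont : ContinuousOn f (Set.Icc 0 Tc))
    (hf_nonneg : ∀ T ∈ Set.Icc (0:ℝ) Tc, 0 ≤ f T)
    (hf0 : f 0 = Δ^2) (hfTc : f Tc = 0)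
    (hgap0 : (∫ ξ in (2*kB*Tc*ε)..(hbar*ωD), 1/Real.sqrt (ξ^2 + Δ^2)) = 1/(U0*N0))
    (hgap : ∀ T ∈ Set.Ioc (0:ℝ) Tc,
      (∫ ξ in (2*kB*Tc*ε)..(hbar*ωD),
        (1/Real.sqrt (ξ^2 + f T)) * Real.tanh (Real.sqrt (ξ^2 + f T)/(2*kB*T)))
        = 1/(U0*N0)) :
    StrictAntiOn f (Set.Icc 0 Tc) :=
  gap_function_strictAnti_general kB hbar ωD U0 N0 ε Tc Δ f hkB hε hTc hcut hf_nonneg hf0 hgap0 hgap
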